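/- arXiv:2306.10302 — 5 statements merged into one kernel-verified Lean document; each statement's English description precedes it below -/
import Mathlib

section
/- For all real numbers $p > 2$, $r \geq 1$, and all $\tau \in (0,1) \cup (1,\infty)$, one has $r(1-\tau^p) + p\tau^p \ln(\tau^r) > 0$. -/
theorem stmt_0 (p r τ : ℝ) (hp : 2 < p) (hr : 1 ≤ r)
    (hτ : τ ∈ Set.Ioo (0:ℝ) 1 ∪ Set.Ioi (1:ℝ)) :
    0 < r * (1 - τ ^ p) + p * τ ^ p * Real.log (τ ^ r) := by
  have hτ0 : 0 < τ := by
    rcases hτ with ⟨h1, _⟩ | h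
    · exact h1
    · exact lt_trans one_pos h
  set x := τ ^ p with hxdef
  have hx : 0 < x := Real.rpow_pos_of_pos hτ0 p
  have hx1 : x ≠ 1 := by
    rcases hτ with ⟨h1, h2⟩ | h
    · exact ne_of_lt (Real.rpow_lt_one (le_of_lt h1) h2 (by linarith))
    · exact ne_of_gt (Real.one_lt_rpow_iff_of_pos hτ0 |>.2 (Or.inl ⟨h, by linarith⟩))
  have hinv : Real.log x⁻¹ < x⁻¹ - 1 :=
    Real.log_lt_sub_one_of_pos (inv_pos.2 hx) (by simpa using inv_ne_one.2 hx1)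
  rw [Real.log_inv] at hinv
  have key : x - 1 < x * Real.log x := by
    have := mul_lt_mul_of_pos_left hinv hx
    rw [mul_sub, mul_inv_cancel₀ (ne_of_gt hx)] at this
    nlinarith
  have hlogx : Real.log x = p * Real.log τ := Real.log_rpow hτ0 p
  rw [Real.log_rpow hτ0 r]
  have h2 : 0 < 1 - x + x * Real.log x := by linarith
  have heq : r * (1 - x) + p * x * (r * Real.log τ)
      = r * ((1 - x) + x * Real.log x) := by rw [hlogx]; ring
  rw [heq]
  exact mul_pos (lt_of_lt_of_le one_pos hr) h2
end

section
/- Let $a > 0$ with $a \neq 1$. Then the function $f(x) = \frac{1 - a^x}{x}$ is strictly monotonically decreasing on $(0, +\infty)$. -/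
theorem stmt_1 (a : ℝ) (ha : 0 < a) (ha1 : a ≠ 1) :
    StrictAntiOn (fun x : ℝ => (1 - a ^ x) / x) (Set.Ioi (0:ℝ)) := by
  set c := Real.log a with hc
  have hc0 : c ≠ 0 := Real.log_ne_zero_of_pos_of_ne_one ha ha1
  have hconv : StrictConvexOn ℝ Set.univ (fun x : ℝ => a ^ x) := by
    constructor
    · exact convex_univ
    · intro x _ y _ hxy t s ht hs hts
      have hne : c * x ≠ c * y := fun h => hxy (mul_left_cancel₀ hc0 h)
      have := strictConvexOn_exp.2 (Set.mem_univ (c * x)) (Set.mem_univ (c * y))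
        hne ht hs hts
      simp only [Real.rpow_def_of_pos ha, smul_eq_mul] at *
      calc Real.exp (c * (t * x + s * y)) = Real.exp (t * (c * x) + s * (c * y)) := by ring_nf
        _ < t * Real.exp (c * x) + s * Real.exp (c * y) := this
  intro x hx y hy hxy
  have hx0 : (0:ℝ) < x := hx
  have hy0 : (0:ℝ) < y := hy
  have key := hconv.secant_strict_mono (a := 0) (Set.mem_univ 0) (Set.mem_univ x)
    (Set.mem_univ y) hx0.ne' hy0.ne' hxy
  simp only [Real.rpow_zero, sub_zero] at key
  have h1 : (1 - a ^ y) / y = -((a ^ y - 1) / y) := by ring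
  have h2 : (1 - a ^ x) / x = -((a ^ x - 1) / x) := by ring
  simp only []
  rw [h1, h2]
  exact neg_lt_neg key
end

section
/- Let $a > 0$ with $a \neq 1$ and define $k(x) = a^x - a^x \cdot x \ln a - 1$. Then $k(x) < 0$ for all $x \in (0, +\infty)$. -/
theorem stmt_2 (a : ℝ) (ha : 0 < a) (ha1 : a ≠ 1) (x : ℝ) (hx : 0 < x) :
    a ^ x - a ^ x * x * Real.log a - 1 < 0 := by
  have hla : Real.log a ≠ 0 := Real.log_ne_zero_of_pos_of_ne_one ha ha1
  set t := x * Real.log a with ht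
  have ht0 : t ≠ 0 := mul_ne_zero (ne_of_gt hx) hla
  have hrw : a ^ x = Real.exp t := by
    rw [Real.rpow_def_of_pos ha, mul_comm]
  rw [hrw]
  have key : 1 - t < Real.exp (-t) := by
    have := Real.add_one_lt_exp (neg_ne_zero.mpr ht0)
    linarith
  rcases le_or_gt (1 - t) 0 with h | h
  · nlinarith [Real.exp_pos t, mul_nonpos_of_nonneg_of_nonpos (Real.exp_pos t).le h]
  · have := mul_lt_mul_of_pos_left key (Real.exp_pos t)
    rw [← Real.exp_add] at this
    simp at this
    nlinarith
end

section
/- Let $a, b \geq 0$, $p > 4$, and let $A, B \geq 0$ be real numbers. Suppose $F : [0,\infty) \to \mathbb{R}$ is defined by $F(t) = \frac{a}{2}t^2 A + \frac{b}{4}t^4 A^2 + \frac{\lambda m}{2k} t^{2k/m} P + \frac{r}{p^2} t^p Q - \frac{1}{p} t^p (\ln t^r) Q - \frac{1}{p} t^p R$ where $P, Q > 0$, $R \in \mathbb{R}$, $\lambda \geq 0$, $r \geq 1$, $1 < 2k/m \leq p$. Then if $F'(1)\cdot 1 = a A + b A^2 + \lambda P - R = 0$, one has $F(1) \geq F(t)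 + \frac{1-t^p}{p}(aA + bA^2 + \lambda P - R) + a\left(\frac{1-t^2}{2} - \frac{1-t^p}{p}\right)A + b\left(\frac{1-t^4}{4} - \frac{1-t^p}{p}\right)A^2$ for all $t \geq 0$. -/
lemma aux_slog {s : ℝ} (hs : 0 ≤ s) : s - 1 ≤ s * Real.log s := by
  rcases eq_or_lt_of_le hs with h | h
  · simp [← h]
  · have h1 : Real.log s⁻¹ ≤ s⁻¹ - 1 := Real.log_le_sub_one_of_pos (by positivity)
    rw [Real.log_inv] at h1
    have := mul_le_mul_of_nonneg_left h1 h.le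
    nlinarith [mul_inv_cancel₀ h.ne']

lemma aux_mono {t κ p : ℝ} (ht : 0 ≤ t) (hκ : 0 < κ) (hκp : κ ≤ p) :
    (1 - t ^ p) / p ≤ (1 - t ^ κ) / κ := by
  have hp : 0 < p := lt_of_lt_of_le hκ hκp
  rcases eq_or_lt_of_le ht with h | h
  · rw [← h, Real.zero_rpow hp.ne', Real.zero_rpow hκ.ne']
    simpa using one_div_le_one_div_of_le hκ hκp
  · set s := t ^ κ with hs
    have hs0 : 0 < s := Real.rpow_pos_of_pos h κ
    have hq : 1 ≤ p / κ := (one_le_div hκ).mpr hκp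
    have htp : t ^ p = s ^ (p / κ) := by
      have hk : κ * (p / κ) = p := by field_simp
      rw [hs, ← Real.rpow_mul ht, hk]
    have hber : 1 + (p / κ) * (s - 1) ≤ (1 + (s - 1)) ^ (p / κ) :=
      one_add_mul_self_le_rpow_one_add (by linarith) hq
    rw [htp]
    have : (1 + (s - 1)) = s := by ring
    rw [this] at hber
    rw [div_le_div_iff₀ hp hκ]
    have := mul_le_mul_of_nonneg_left hber hκ.le
    field_simp at this ⊢
    nlinarith

theorem stmt_15 (a b lam r p A P Q R : ℝ) (k m : ℕ)
    (ha : 0 ≤ a) (hb : 0 ≤ b) (hlam : 0 ≤ lam) (hr : 1 ≤ r) (hp : 4 < p)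
    (hA : 0 ≤ A) (hP : 0 < P) (hQ : 0 < Q)
    (hkm1 : 1 < 2 * (k:ℝ) / (m:ℝ)) (hkmp : 2 * (k:ℝ) / (m:ℝ) ≤ p) :
    let κ : ℝ := 2 * (k:ℝ) / (m:ℝ)
    let F : ℝ → ℝ := fun t =>
      a / 2 * t ^ (2:ℕ) * A + b / 4 * t ^ (4:ℕ) * A ^ 2 + lam / κ * t ^ κ * P
        + r / p ^ 2 * t ^ p * Q - 1 / p * t ^ p * Real.log (t ^ r) * Q - 1 / p * t ^ p * R
    a * A + b * A ^ 2 + lam * P - R = 0 →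
    ∀ t : ℝ, 0 ≤ t →
      F 1 ≥ F t + (1 - t ^ p) / p * (a * A + b * A ^ 2 + lam * P - R)
        + a * ((1 - t ^ (2:ℕ)) / 2 - (1 - t ^ p) / p) * A
        + b * ((1 - t ^ (4:ℕ)) / 4 - (1 - t ^ p) / p) * A ^ 2 := by
  intro κ F hcon t ht
  have hκ1 : (1:ℝ) < κ := hkm1
  have hκ0 : (0:ℝ) < κ := by linarith
  have hp0 : (0:ℝ) < p := by linarith
  have hr0 : (0:ℝ) < r := by linarith
  have hR : R = a * A + b * A ^ 2 + lam * P := by linarith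
  -- key inequality 2 : 0 ≤ r * (1 - t ^ p) + p * (t ^ p * Real.log (t ^ r))
  have key2 : 0 ≤ r * (1 - t ^ p) + p * (t ^ p * Real.log (t ^ r)) := by
    rcases eq_or_lt_of_le ht with h | h
    · rw [← h, Real.zero_rpow hp0.ne', Real.zero_rpow hr0.ne', Real.log_zero]
      simp [hr0.le]
    · have hlogr : Real.log (t ^ r) = r * Real.log t := Real.log_rpow h r
      have hlogp : Real.log (t ^ p) = p * Real.log t := Real.log_rpow h p
      have hs : 0 ≤ t ^ p := (Real.rpow_pos_of_pos h p).le
      have h1 := aux_slog hs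
      rw [hlogp] at h1
      rw [hlogr]
      nlinarith
  have key1 : (1 - t ^ p) / p ≤ (1 - t ^ κ) / κ := aux_mono ht hκ0 hkmp
  have k1 : 0 ≤ lam * P * ((1 - t ^ κ) / κ - (1 - t ^ p) / p) := by
    have := sub_nonneg.mpr key1
    positivity
  have k2 : 0 ≤ Q / p ^ 2 * (r * (1 - t ^ p) + p * (t ^ p * Real.log (t ^ r))) := by
    positivity
  have hdiff : F 1 - (F t + (1 - t ^ p) / p * (a * A + b * A ^ 2 + lam * P - R)
        + a * ((1 - t ^ (2:ℕ)) / 2 - (1 - t ^ p) / p) * A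
        + b * ((1 - t ^ (4:ℕ)) / 4 - (1 - t ^ p) / p) * A ^ 2)
      = lam * P * ((1 - t ^ κ) / κ - (1 - t ^ p) / p)
        + Q / p ^ 2 * (r * (1 - t ^ p) + p * (t ^ p * Real.log (t ^ r))) := by
    simp only [F, hR, Real.one_rpow, Real.log_one, one_pow]
    field_simp
    ring
  linarith [k1, k2, hdiff.ge, hdiff.le]
end

section
/- Let $a > 0$, $b \geq 0$, $p > 4$, $r \geq 1$, $\lambda \geq 0$, and let $A > 0$, $P \geq 0$, $Q > 0$, $R \in \mathbb{R}$, $1 < 2k/m \leq p$. Define $f(t) = a t^2 A + b t^4 A^2 + \lambda t^{2k/m} P - t^p (\ln t^r) Q - t^p R$ for $t > 0$. Then there exists a unique $t_0 > 0$ with $f(t_0) = 0$; moreover $f(t) > 0$ for $t \in (0, t_0)$ and $f(t) < 0$ for $t > t_0$, provided $f$ changes sign (which always happens since $f(t) > 0$ for small $t > 0$ and $f(t) \to -\infty$ as $t \to +\infty$). -/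
theorem stmt_17 (a b lam r p A P Q R : ℝ) (k m : ℕ)
    (ha : 0 < a) (hb : 0 ≤ b) (hlam : 0 ≤ lam) (hr : 1 ≤ r) (hp : 4 < p)
    (hA : 0 < A) (hP : 0 ≤ P) (hQ : 0 < Q)
    (hkm1 : 1 < 2 * (k:ℝ) / (m:ℝ)) (hkmp : 2 * (k:ℝ) / (m:ℝ) ≤ p) :
    let κ : ℝ := 2 * (k:ℝ) / (m:ℝ)
    let f : ℝ → ℝ := fun t =>
      a * t ^ (2:ℕ) * A + b * t ^ (4:ℕ) * A ^ 2 + lam * t ^ κ * P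
        - t ^ p * Real.log (t ^ r) * Q - t ^ p * R
    ∃ t₀ : ℝ, 0 < t₀ ∧ f t₀ = 0 ∧
      (∀ t : ℝ, 0 < t → t < t₀ → 0 < f t) ∧
      (∀ t : ℝ, t₀ < t → f t < 0) ∧
      (∀ t : ℝ, 0 < t → f t = 0 → t = t₀) := by
  intro κ f
  have hκp : κ ≤ p := hkmp
  set g : ℝ → ℝ := fun t =>
    a * A * t ^ (2 - p) + b * A ^ 2 * t ^ (4 - p) + lam * P * t ^ (κ - p)
      - Q * (r * Real.log t) - R with hg
  have hQr : 0 < Q * r := mul_pos hQ (lt_of_lt_of_le one_pos hr)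
  have key : ∀ t : ℝ, 0 < t → f t = t ^ p * g t := by
    intro t ht
    have e2 : t ^ p * t ^ (2 - p) = t ^ (2 : ℕ) := by
      rw [← Real.rpow_natCast t 2, ← Real.rpow_add ht]; norm_num
    have e4 : t ^ p * t ^ (4 - p) = t ^ (4 : ℕ) := by
      rw [← Real.rpow_natCast t 4, ← Real.rpow_add ht]; norm_num
    have eκ : t ^ p * t ^ (κ - p) = t ^ κ := by
      rw [← Real.rpow_add ht]; ring_nf
    simp only [f, g]
    rw [Real.log_rpow ht, ← e2, ← e4, ← eκ]
    ring
  have hanti : StrictAntiOn g (Set.Ioi (0:ℝ)) := by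
    intro x hx y hy hxy
    simp only [Set.mem_Ioi] at hx hy
    have h1 : y ^ (2 - p) < x ^ (2 - p) :=
      Real.rpow_lt_rpow_of_neg hx hxy (by linarith)
    have h2 : y ^ (4 - p) ≤ x ^ (4 - p) :=
      Real.rpow_le_rpow_of_nonpos hx hxy.le (by linarith)
    have h3 : y ^ (κ - p) ≤ x ^ (κ - p) :=
      Real.rpow_le_rpow_of_nonpos hx hxy.le (by linarith)
    have h4 : Real.log x < Real.log y := Real.log_lt_log hx hxy
    have m1 : a * A * y ^ (2 - p) < a * A * x ^ (2 - p) :=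
      mul_lt_mul_of_pos_left h1 (mul_pos ha hA)
    have m2 : b * A ^ 2 * y ^ (4 - p) ≤ b * A ^ 2 * x ^ (4 - p) :=
      mul_le_mul_of_nonneg_left h2 (mul_nonneg hb (sq_nonneg A))
    have m3 : lam * P * y ^ (κ - p) ≤ lam * P * x ^ (κ - p) :=
      mul_le_mul_of_nonneg_left h3 (mul_nonneg hlam hP)
    have m4 : Q * r * Real.log x < Q * r * Real.log y :=
      mul_lt_mul_of_pos_left h4 hQr
    simp only [g]
    nlinarith [m1, m2, m3, m4]
  have hcont : ContinuousOn g (Set.Ioi (0:ℝ)) := by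
    have hp1 : ContinuousOn (fun t : ℝ => t ^ (2 - p)) (Set.Ioi 0) := fun x hx =>
      (Real.continuousAt_rpow_const x _ (Or.inl (ne_of_gt hx))).continuousWithinAt
    have hp2 : ContinuousOn (fun t : ℝ => t ^ (4 - p)) (Set.Ioi 0) := fun x hx =>
      (Real.continuousAt_rpow_const x _ (Or.inl (ne_of_gt hx))).continuousWithinAt
    have hp3 : ContinuousOn (fun t : ℝ => t ^ (κ - p)) (Set.Ioi 0) := fun x hx =>
      (Real.continuousAt_rpow_const x _ (Or.inl (ne_of_gt hx))).continuousWithinAt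
    have hl : ContinuousOn Real.log (Set.Ioi 0) :=
      Real.continuousOn_log.mono (fun x hx => ne_of_gt hx)
    exact ((((continuousOn_const.mul hp1).add (continuousOn_const.mul hp2)).add
      (continuousOn_const.mul hp3)).sub
      (continuousOn_const.mul (continuousOn_const.mul hl))).sub continuousOn_const
  -- endpoints
  set t₁ : ℝ := Real.exp (-(|R| / (Q * r)) - 1) with ht₁def
  set t₂ : ℝ := Real.exp ((a * A + b * A ^ 2 + lam * P + |R|) / (Q * r) + 1) with ht₂def
  have ht₁pos : 0 < t₁ := Real.exp_pos _
  have ht₂pos : 0 < t₂ := Real.exp_pos _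
  have hlog1 : Real.log t₁ = -(|R| / (Q * r)) - 1 := Real.log_exp _
  have hlog2 : Real.log t₂ = (a * A + b * A ^ 2 + lam * P + |R|) / (Q * r) + 1 :=
    Real.log_exp _
  have ht₁le1 : t₁ ≤ 1 := by
    have h0 : 0 ≤ |R| / (Q * r) := div_nonneg (abs_nonneg R) hQr.le
    rw [ht₁def]
    exact Real.exp_le_one_iff.mpr (by linarith)
  have ht₂ge1 : 1 ≤ t₂ := by
    have h0 : 0 ≤ a * A + b * A ^ 2 + lam * P + |R| := by
      have := mul_pos ha hA
      have := mul_nonneg hb (sq_nonneg A)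
      have := mul_nonneg hlam hP
      have := abs_nonneg R
      linarith
    have h1 : 0 ≤ (a * A + b * A ^ 2 + lam * P + |R|) / (Q * r) := div_nonneg h0 hQr.le
    rw [ht₂def]
    exact Real.one_le_exp (by linarith)
  have ht₁₂ : t₁ ≤ t₂ := le_trans ht₁le1 ht₂ge1
  have hg1 : 0 < g t₁ := by
    have r1 : (1:ℝ) ≤ t₁ ^ (2 - p) :=
      Real.one_le_rpow_of_pos_of_le_one_of_nonpos ht₁pos ht₁le1 (by linarith)
    have r2 : (0:ℝ) ≤ t₁ ^ (4 - p) := (Real.rpow_pos_of_pos ht₁pos _).le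
    have r3 : (0:ℝ) ≤ t₁ ^ (κ - p) := (Real.rpow_pos_of_pos ht₁pos _).le
    have hlogval : Q * (r * Real.log t₁) = -(|R|) - Q * r := by
      rw [hlog1]; field_simp
    have habs : R ≤ |R| := le_abs_self R
    simp only [g]
    have m1 : a * A ≤ a * A * t₁ ^ (2 - p) := by
      simpa using mul_le_mul_of_nonneg_left r1 (mul_pos ha hA).le
    have m3 : 0 ≤ lam * P * t₁ ^ (κ - p) := mul_nonneg (mul_nonneg hlam hP) r3
    have m2 : 0 ≤ b * A ^ 2 * t₁ ^ (4 - p) := mul_nonneg (mul_nonneg hb (sq_nonneg A)) r2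
    linarith [mul_pos ha hA]
  have hg2 : g t₂ < 0 := by
    have r1 : t₂ ^ (2 - p) ≤ 1 :=
      Real.rpow_le_one_of_one_le_of_nonpos ht₂ge1 (by linarith)
    have r2 : t₂ ^ (4 - p) ≤ 1 :=
      Real.rpow_le_one_of_one_le_of_nonpos ht₂ge1 (by linarith)
    have r3 : t₂ ^ (κ - p) ≤ 1 :=
      Real.rpow_le_one_of_one_le_of_nonpos ht₂ge1 (by linarith)
    have r1' : (0:ℝ) < t₂ ^ (2 - p) := Real.rpow_pos_of_pos ht₂pos _
    have hlogval : Q * (r * Real.log t₂) = a * A + b * A ^ 2 + lam * P + |R| + Q * r := by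
      rw [hlog2]; field_simp
    have habs : -|R| ≤ R := neg_abs_le R
    simp only [g]
    have m1 : a * A * t₂ ^ (2 - p) ≤ a * A := by
      simpa using mul_le_mul_of_nonneg_left r1 (mul_pos ha hA).le
    have m2 : b * A ^ 2 * t₂ ^ (4 - p) ≤ b * A ^ 2 := by
      simpa using mul_le_mul_of_nonneg_left r2 (mul_nonneg hb (sq_nonneg A))
    have m3 : lam * P * t₂ ^ (κ - p) ≤ lam * P := by
      simpa using mul_le_mul_of_nonneg_left r3 (mul_nonneg hlam hP)
    linarith
  -- IVT
  have hsub : Set.Icc t₁ t₂ ⊆ Set.Ioi (0:ℝ) := fun x hx => lt_of_lt_of_le ht₁pos hx.1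
  have hivt := intermediate_value_Icc' ht₁₂ (hcont.mono hsub)
  have h0mem : (0:ℝ) ∈ Set.Icc (g t₂) (g t₁) := ⟨hg2.le, hg1.le⟩
  obtain ⟨t₀, ht₀mem, ht₀zero⟩ := hivt h0mem
  have ht₀pos : 0 < t₀ := lt_of_lt_of_le ht₁pos ht₀mem.1
  have hgzero : ∀ t : ℝ, 0 < t → (f t = 0 ↔ g t = 0) := by
    intro t ht
    rw [key t ht]
    constructor
    · intro h
      rcases mul_eq_zero.mp h with h | h
      · exact absurd h (ne_of_gt (Real.rpow_pos_of_pos ht p))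
      · exact h
    · intro h; rw [h, mul_zero]
  refine ⟨t₀, ht₀pos, ?_, ?_, ?_, ?_⟩
  · exact (hgzero t₀ ht₀pos).mpr ht₀zero
  · intro t ht htlt
    rw [key t ht]
    have : g t₀ < g t := hanti (Set.mem_Ioi.mpr ht) (Set.mem_Ioi.mpr ht₀pos) htlt
    rw [ht₀zero] at this
    exact mul_pos (Real.rpow_pos_of_pos ht p) this
  · intro t htgt
    have ht : 0 < t := lt_trans ht₀pos htgt
    rw [key t ht]
    have : g t < g t₀ := hanti (Set.mem_Ioi.mpr ht₀pos) (Set.mem_Ioi.mpr ht) htgt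
    rw [ht₀zero] at this
    exact mul_neg_of_pos_of_neg (Real.rpow_pos_of_pos ht p) this
  · intro t ht hft
    have hgt : g t = 0 := (hgzero t ht).mp hft
    by_contra hne
    rcases lt_or_gt_of_ne hne with h | h
    · have := hanti (Set.mem_Ioi.mpr ht) (Set.mem_Ioi.mpr ht₀pos) h
      rw [hgt, ht₀zero] at this; exact lt_irrefl _ this
    · have := hanti (Set.mem_Ioi.mpr ht₀pos) (Set.mem_Ioi.mpr ht) h
      rw [hgt, ht₀zero] at this; exact lt_irrefl _ this
end
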